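/- Under the same setting, for any symmetric profile x (constant x_i ∈ X_i on each Θ_i), the L²-distance from x to the set of measurable selections of θ ↦ X_θ is at most max_i d_i, where d_i = sup_{θ∈Θ_i} d_H(X_θ, X_i). -/

import Mathlib

/-!
The profile `y` can be any measurable selection of `θ ↦ 𝒳 θ ∩ closedBall (v (ι θ)) (d (ι θ))`:
these values are nonempty since the point of `𝒳 θ` nearest to `v i ∈ X_i` lies within
`d_H(𝒳 θ, X_i) ≤ d_i`, and a pointwise distance at most `D` bounds the `L²`-distance by `D` on the
probability space `[0,1]`.

Measurable selections exist for every Borel correspondence with convex values in `ℝⁿ`, by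
induction on `n`. Over the Borel set `U` of parameters whose section meets a rational hyperplane
`{x₀ = q}`, select inside these slices (a problem in dimension `n - 1`) and glue countably many
selectors. Off `U` each convex section lies in a single hyperplane `{x₀ = c}`, so forgetting `x₀`
is injective on that part of the graph; by Lusin–Souslin its image is Borel, and a measurable left
inverse recovers `x₀`.
-/

open Metric MeasureTheory

/-- Lebesgue measure restricted to the player set `Θ = [0,1]`. -/
noncomputable def μ01 : Measure ℝ := volume.restrict (Set.Icc 0 1)

open Set Function

section MeasurableSelection

variable {α E : Type*} [MeasurableSpace α] [MeasurableSpace E]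

def HasMeasurableSelection (B : Set (α × E)) : Prop :=
  MeasurableSet (Prod.fst '' B) ∧
    ∃ σ : α → E, Measurable σ ∧ ∀ a ∈ Prod.fst '' B, (a, σ a) ∈ B

theorem HasMeasurableSelection.of_subset {B B' : Set (α × E)} (h : HasMeasurableSelection B')
    (hsub : B' ⊆ B) (hdom : Prod.fst '' B ⊆ Prod.fst '' B') : HasMeasurableSelection B := by
  obtain ⟨hm, σ, hσ, hsel⟩ := h
  have heq : Prod.fst '' B' = Prod.fst '' B := (image_mono hsub).antisymm hdom
  exact ⟨heq ▸ hm, σ, hσ, fun a ha => hsub (hsel a (hdom ha))⟩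

theorem HasMeasurableSelection.image {F : Type*} [MeasurableSpace F] {B : Set (α × E)}
    (h : HasMeasurableSelection B) {f : α × E → α × F} (hf : Measurable f)
    (hfst : ∀ p ∈ B, (f p).1 = p.1) : HasMeasurableSelection (f '' B) := by
  obtain ⟨hm, σ, hσ, hsel⟩ := h
  have hdom : Prod.fst '' (f '' B) = Prod.fst '' B := by
    rw [image_image]
    exact image_congr hfst
  refine ⟨hdom ▸ hm, fun a => (f (a, σ a)).2, (hf.comp (measurable_id.prodMk hσ)).snd, ?_⟩
  intro a ha
  have hB := hsel a (hdom ▸ ha)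
  convert mem_image_of_mem f hB using 1
  exact Prod.ext (hfst _ hB).symm rfl

theorem HasMeasurableSelection.iUnion {ι : Type*} [Countable ι] [Nonempty ι]
    {B : ι → Set (α × E)} (h : ∀ i, HasMeasurableSelection (B i)) :
    HasMeasurableSelection (⋃ i, B i) := by
  classical
  choose hm σ hσ hsel using h
  obtain ⟨e, he⟩ := exists_surjective_nat ι
  have hU : MeasurableSet (⋃ i, Prod.fst '' B i) := .iUnion hm
  have hfirst : ∀ a, ∃ n, a ∈ Prod.fst '' B (e n) ∨ a ∉ ⋃ i, Prod.fst '' B i := by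
    intro a
    by_cases ha : a ∈ ⋃ i, Prod.fst '' B i
    · obtain ⟨i, hi⟩ := mem_iUnion.1 ha
      obtain ⟨n, rfl⟩ := he i
      exact ⟨n, .inl hi⟩
    · exact ⟨0, .inr ha⟩
  rw [HasMeasurableSelection, image_iUnion]
  refine ⟨hU, fun a => σ (e (Nat.find (hfirst a))) a,
    Measurable.find (p := fun n a => a ∈ Prod.fst '' B (e n) ∨ a ∉ ⋃ i, Prod.fst '' B i)
      (fun n => hσ _) (fun n => (hm _).union hU.compl) hfirst, fun a ha => ?_⟩
  rcases Nat.find_spec (hfirst a) with hmem | hnot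
  · exact mem_iUnion.2 ⟨_, hsel _ a hmem⟩
  · exact absurd ha hnot

theorem HasMeasurableSelection.union {B B' : Set (α × E)} (h : HasMeasurableSelection B)
    (h' : HasMeasurableSelection B') : HasMeasurableSelection (B ∪ B') :=
  union_eq_iUnion ▸ HasMeasurableSelection.iUnion (Bool.forall_bool.2 ⟨h', h⟩)

end MeasurableSelection

theorem exists_measurable_leftInvOn {X Y : Type*} [MeasurableSpace X] [StandardBorelSpace X]
    [MeasurableSpace Y] [MeasurableSpace.CountablySeparated Y] {W : Set X} {f : X → Y}
    (hW : MeasurableSet W) (hf : Measurable f) (hinj : InjOn f W) {g₀ : Y → X}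
    (hg₀ : Measurable g₀) : ∃ g : Y → X, Measurable g ∧ LeftInvOn g f W := by
  have := hW.standardBorel
  have hemb : MeasurableEmbedding (W.domRestrict f) :=
    (hf.comp measurable_subtype_coe).measurableEmbedding (injOn_iff_injective.1 hinj)
  exact ⟨extend (W.domRestrict f) Subtype.val g₀, hemb.measurable_extend measurable_subtype_coe hg₀,
    fun p hp => hemb.injective.extend_apply _ _ ⟨p, hp⟩⟩

def HasConvexSelections (α E : Type*) [MeasurableSpace α] [AddCommGroup E] [Module ℝ E]
    [MeasurableSpace E] : Prop :=
  ∀ B : Set (α × E), MeasurableSet B → (∀ a, Convex ℝ (Prod.mk a ⁻¹' B)) →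
    HasMeasurableSelection B

theorem Convex.exists_rat_fst_eq {E : Type*} [AddCommGroup E] [Module ℝ E] {S : Set (ℝ × E)}
    (hS : Convex ℝ S) {x y : ℝ × E} (hx : x ∈ S) (hy : y ∈ S) (hlt : x.1 < y.1) :
    ∃ q : ℚ, ∃ z ∈ S, z.1 = q := by
  obtain ⟨q, hxq, hqy⟩ := exists_rat_btwn hlt
  have hI : (Prod.fst '' S).OrdConnected := (hS.linear_image (LinearMap.fst ℝ ℝ E)).ordConnected
  obtain ⟨z, hz, hzq⟩ := hI.out (mem_image_of_mem _ hx) (mem_image_of_mem _ hy) ⟨hxq.le, hqy.le⟩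
  exact ⟨q, z, hz, hzq⟩

namespace HasConvexSelections

variable {α E : Type*} [MeasurableSpace α] [AddCommGroup E] [Module ℝ E] [MeasurableSpace E]

theorem of_subsingleton [Subsingleton E] : HasConvexSelections α E := by
  intro B hB _
  have hdom : Prod.fst '' B = (fun a => (a, (0 : E))) ⁻¹' B := by
    ext a
    refine ⟨?_, fun h => ⟨_, h, rfl⟩⟩
    rintro ⟨⟨a, x⟩, hx, rfl⟩
    rwa [Subsingleton.elim x 0] at hx
  exact ⟨hdom ▸ measurable_prodMk_right hB, fun _ => 0, measurable_const,
    fun a ha => by rwa [hdom] at ha⟩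

theorem of_surjective {F : Type*} [AddCommGroup F] [Module ℝ F] [MeasurableSpace F]
    (h : HasConvexSelections α E) (e : E →ₗ[ℝ] F) (he : Measurable e) (hsurj : Surjective e) :
    HasConvexSelections α F := by
  intro B hB hconv
  have hpull := h (Prod.map id e ⁻¹' B) (measurable_id.prodMap he hB)
    fun a => (hconv a).linear_preimage e
  refine (hpull.image (measurable_id.prodMap he) fun _ _ => rfl).of_subset
    (image_preimage_subset _ _) ?_
  rw [image_preimage_eq B (surjective_id.prodMap hsurj)]

theorem hasMeasurableSelection_inter_fst_eq (h : HasConvexSelections α E)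
    {B : Set (α × (ℝ × E))} (hB : MeasurableSet B) (hconv : ∀ a, Convex ℝ (Prod.mk a ⁻¹' B))
    (t : ℝ) : HasMeasurableSelection (B ∩ {p | p.2.1 = t}) := by
  set f : α × E → α × (ℝ × E) := fun p => (p.1, (t, p.2))
  have hf : Measurable f := by fun_prop
  have hslice := h (f ⁻¹' B) (hf hB) fun a =>
    (hconv a).affine_preimage ((AffineMap.const ℝ E t).prod (AffineMap.id ℝ E))
  have hrange : range f = {p | p.2.1 = t} := by
    ext ⟨a, s, y⟩
    simp [f, eq_comm]
  rw [← hrange, ← image_preimage_eq_inter_range]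
  exact hslice.image hf fun _ _ => rfl

variable [StandardBorelSpace α] [StandardBorelSpace E]

theorem hasMeasurableSelection_of_fst_eq (h : HasConvexSelections α E)
    {W : Set (α × (ℝ × E))} (hW : MeasurableSet W) (hconv : ∀ a, Convex ℝ (Prod.mk a ⁻¹' W))
    (hfst : ∀ a x y, (a, x) ∈ W → (a, y) ∈ W → x.1 = y.1) : HasMeasurableSelection W := by
  set drop : α × (ℝ × E) → α × E := fun p => (p.1, p.2.2)
  have hdrop : Measurable drop := by fun_prop
  have hinj : InjOn drop W := by
    rintro ⟨a, x⟩ hx ⟨b, y⟩ hy hxy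
    obtain ⟨rfl, h2⟩ := Prod.ext_iff.1 hxy
    exact Prod.ext rfl (Prod.ext (hfst a x y hx hy) h2)
  have hdropconv : ∀ a, Convex ℝ (Prod.mk a ⁻¹' (drop '' W)) := by
    intro a
    convert (hconv a).linear_image (LinearMap.snd ℝ ℝ E) using 1
    ext y
    simp [drop]
  have hdropsel := h _ (hW.image_of_measurable_injOn hdrop hinj) hdropconv
  obtain ⟨g, hg, hgW⟩ := exists_measurable_leftInvOn hW hdrop hinj
    (g₀ := fun p => (p.1, (0, p.2))) (by fun_prop)
  rw [← hgW.image_image]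
  refine hdropsel.image hg ?_
  rintro _ ⟨p, hp, rfl⟩
  rw [hgW hp]

theorem prod (h : HasConvexSelections α E) : HasConvexSelections α (ℝ × E) := by
  intro B hB hconv
  have hslices : HasMeasurableSelection (⋃ q : ℚ, B ∩ {p | p.2.1 = q}) :=
    .iUnion fun q => h.hasMeasurableSelection_inter_fst_eq hB hconv q
  set U := Prod.fst '' ⋃ q : ℚ, B ∩ {p | p.2.1 = q}
  have hfst : ∀ a ∉ U, ∀ x y, (a, x) ∈ B → (a, y) ∈ B → x.1 = y.1 := by
    intro a ha x y hx hy
    have hnlt : ∀ x y, (a, x) ∈ B → (a, y) ∈ B → ¬ x.1 < y.1 := fun x y hx hy hlt => by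
      obtain ⟨q, z, hz, hzq⟩ := (hconv a).exists_rat_fst_eq hx hy hlt
      exact ha ⟨(a, z), mem_iUnion.2 ⟨q, hz, hzq⟩, rfl⟩
    exact le_antisymm (not_lt.1 (hnlt y x hy hx)) (not_lt.1 (hnlt x y hx hy))
  have hrest : HasMeasurableSelection (B ∩ Prod.fst ⁻¹' Uᶜ) := by
    refine h.hasMeasurableSelection_of_fst_eq (hB.inter (measurable_fst hslices.1.compl))
      (fun a => ?_) fun a x y hx hy => hfst a hx.2 x y hx.1 hy.1
    by_cases ha : a ∈ U <;> simp [preimage_preimage, ha, hconv a, convex_empty]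
  refine (hslices.union hrest).of_subset
    (union_subset (iUnion_subset fun _ => inter_subset_left) inter_subset_left) ?_
  rintro a ⟨p, hp, rfl⟩
  by_cases ha : p.1 ∈ U
  · exact image_mono subset_union_left ha
  · exact ⟨p, .inr ⟨hp, ha⟩, rfl⟩

end HasConvexSelections

theorem hasConvexSelections_pi {α : Type*} [MeasurableSpace α] [StandardBorelSpace α] (n : ℕ) :
    HasConvexSelections α (Fin n → ℝ) := by
  induction n with
  | zero => exact .of_subsingleton
  | succ n ih =>
    let e := Fin.consLinearEquiv ℝ fun _ : Fin (n + 1) => ℝ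
    exact ih.prod.of_surjective e.toLinearMap
      (LinearMap.continuous_of_finiteDimensional _).measurable e.surjective

theorem hasConvexSelections_of_finiteDimensional (α E : Type*) [MeasurableSpace α]
    [StandardBorelSpace α] [NormedAddCommGroup E] [NormedSpace ℝ E] [FiniteDimensional ℝ E]
    [MeasurableSpace E] [BorelSpace E] : HasConvexSelections α E :=
  let e := (Module.finBasis ℝ E).equivFun.symm
  (hasConvexSelections_pi _).of_surjective e.toLinearMap
    (LinearMap.continuous_of_finiteDimensional _).measurable e.surjective

theorem hasMeasurableSelection_inter_closedBall {α E : Type*} [MeasurableSpace α]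
    [StandardBorelSpace α] [NormedAddCommGroup E] [NormedSpace ℝ E] [FiniteDimensional ℝ E]
    [MeasurableSpace E] [BorelSpace E] {S : Set (α × E)} (hS : MeasurableSet S)
    (hconv : ∀ a, Convex ℝ (Prod.mk a ⁻¹' S)) {c : α → E} {r : α → ℝ} (hc : Measurable c)
    (hr : Measurable r) : HasMeasurableSelection (S ∩ {p | dist p.2 (c p.1) ≤ r p.1}) :=
  hasConvexSelections_of_finiteDimensional α E _
    (hS.inter (measurableSet_le (measurable_snd.dist (hc.comp measurable_fst))
      (hr.comp measurable_fst)))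
    fun a => (hconv a).inter (convex_closedBall (c a) (r a))

theorem IsCompact.exists_dist_le_hausdorffDist {X : Type*} [PseudoMetricSpace X] {S T : Set X}
    (hS : IsCompact S) (hSne : S.Nonempty) (hT : Bornology.IsBounded T) {v : X} (hv : v ∈ T) :
    ∃ p ∈ S, dist p v ≤ hausdorffDist S T := by
  obtain ⟨p, hp, hpv⟩ := hS.exists_infDist_eq_dist hSne v
  refine ⟨p, hp, ?_⟩
  rw [dist_comm, ← hpv, hausdorffDist_comm]
  exact infDist_le_hausdorffDist_of_mem hv
    (hausdorffEDist_ne_top_of_nonempty_of_bounded ⟨v, hv⟩ hSne hT hS.isBounded)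

theorem integral_norm_sq_le_sq {α E : Type*} [MeasurableSpace α] {μ : Measure α}
    [IsProbabilityMeasure μ] [NormedAddCommGroup E] {f : α → E} {D : ℝ}
    (h : ∀ᵐ x ∂μ, ‖f x‖ ≤ D) : ∫ x, ‖f x‖ ^ 2 ∂μ ≤ D ^ 2 := by
  have hsq : ∀ᵐ x ∂μ, ‖‖f x‖ ^ 2‖ ≤ D ^ 2 := h.mono fun x hx => by
    rw [Real.norm_of_nonneg (by positivity)]
    exact pow_le_pow_left₀ (norm_nonneg _) hx 2
  calc ∫ x, ‖f x‖ ^ 2 ∂μ ≤ ‖∫ x, ‖f x‖ ^ 2 ∂μ‖ := Real.le_norm_self _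
    _ ≤ D ^ 2 * μ.real univ := norm_integral_le_of_norm_le_const hsq
    _ = D ^ 2 := by simp

instance : IsProbabilityMeasure μ01 := ⟨by simp [μ01]⟩

theorem symmetric_profile_close_to_feasible_general {T I : ℕ}
    (𝒳 : ℝ → Set (EuclideanSpace ℝ (Fin T)))
    (Θp : Fin I → Set ℝ) (ι : ℝ → Fin I)
    (Xi : Fin I → Set (EuclideanSpace ℝ (Fin T)))
    (d : Fin I → ℝ) (D : ℝ)
    (hΘcover : (⋃ i, Θp i) = Set.Icc (0:ℝ) 1)
    (hι : ∀ i, ∀ θ ∈ Θp i, ι θ = i) (hιmeas : Measurable ι)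
    (hgraph : MeasurableSet
      {p : ℝ × EuclideanSpace ℝ (Fin T) | p.1 ∈ Set.Icc (0:ℝ) 1 ∧ p.2 ∈ 𝒳 p.1})
    (hXne : ∀ θ ∈ Set.Icc (0:ℝ) 1, (𝒳 θ).Nonempty)
    (hXconv : ∀ θ ∈ Set.Icc (0:ℝ) 1, Convex ℝ (𝒳 θ))
    (hXcomp : ∀ θ ∈ Set.Icc (0:ℝ) 1, IsCompact (𝒳 θ))
    (hXicomp : ∀ i, IsCompact (Xi i))
    (hH : ∀ i, ∀ θ ∈ Θp i, Metric.hausdorffDist (𝒳 θ) (Xi i) ≤ d i)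
    (hD : ∀ i, d i ≤ D)
    (v : Fin I → EuclideanSpace ℝ (Fin T)) (hv : ∀ i, v i ∈ Xi i) :
    ∃ y : ℝ → EuclideanSpace ℝ (Fin T), Measurable y ∧
      (∀ θ ∈ Set.Icc (0:ℝ) 1, y θ ∈ 𝒳 θ) ∧
      (∫ θ, ‖v (ι θ) - y θ‖ ^ 2 ∂μ01) ≤ D ^ 2 := by
  have hgraphconv (θ : ℝ) :
      Convex ℝ (Prod.mk θ ⁻¹' {p : ℝ × _ | p.1 ∈ Icc (0 : ℝ) 1 ∧ p.2 ∈ 𝒳 p.1}) := by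
    by_cases hθ : θ ∈ Icc (0 : ℝ) 1
    · simpa [hθ, -mem_Icc] using hXconv θ hθ
    · simp [hθ, -mem_Icc, convex_empty]
  obtain ⟨-, y, hy, hsel⟩ := hasMeasurableSelection_inter_closedBall hgraph hgraphconv
    ((measurable_of_countable v).comp hιmeas) ((measurable_of_countable d).comp hιmeas)
  have hclose (θ : ℝ) (hθ : θ ∈ Icc (0 : ℝ) 1) : y θ ∈ 𝒳 θ ∧ ‖v (ι θ) - y θ‖ ≤ D := by
    obtain ⟨i, hi⟩ := mem_iUnion.1 (hΘcover ▸ hθ)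
    obtain ⟨p, hp, hpv⟩ := (hXcomp θ hθ).exists_dist_le_hausdorffDist (hXne θ hθ)
      (hXicomp i).isBounded (hv i)
    have hpB : dist p (v (ι θ)) ≤ d (ι θ) := by rw [hι i θ hi]; exact hpv.trans (hH i θ hi)
    have hyB := hsel θ ⟨(θ, p), ⟨⟨hθ, hp⟩, hpB⟩, rfl⟩
    refine ⟨hyB.1.2, ?_⟩
    rw [← dist_eq_norm, dist_comm]
    exact hyB.2.trans (hD _)
  exact ⟨y, hy, fun θ hθ => (hclose θ hθ).1,
    integral_norm_sq_le_sq ((ae_restrict_mem measurableSet_Icc).mono fun θ hθ => (hclose θ hθ).2)⟩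

/-- Lemma `lm:FY` i: a symmetric profile (constant equal to `v i ∈ X_i` on
each `Θ_i`) is at `L²`-distance at most `max_i d_i` from the set of measurable selections
of `θ ↦ 𝒳 θ`, where `d_i ≥ sup_{θ∈Θ_i} d_H(𝒳 θ, X_i)`. -/
theorem symmetric_profile_close_to_feasible {T I : ℕ} {R : ℝ}
    (𝒳 : ℝ → Set (EuclideanSpace ℝ (Fin T)))
    (Θp : Fin I → Set ℝ) (ι : ℝ → Fin I)
    (Xi : Fin I → Set (EuclideanSpace ℝ (Fin T)))
    (d : Fin I → ℝ) (D : ℝ)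
    (hΘmeas : ∀ i, MeasurableSet (Θp i))
    (hΘdisj : ∀ i j, i ≠ j → Disjoint (Θp i) (Θp j))
    (hΘcover : (⋃ i, Θp i) = Set.Icc (0:ℝ) 1)
    (hμpos : ∀ i, 0 < (volume (Θp i)).toReal)
    (hι : ∀ i, ∀ θ ∈ Θp i, ι θ = i) (hιmeas : Measurable ι)
    (hgraph : MeasurableSet
      {p : ℝ × EuclideanSpace ℝ (Fin T) | p.1 ∈ Set.Icc (0:ℝ) 1 ∧ p.2 ∈ 𝒳 p.1})
    (hXne : ∀ θ ∈ Set.Icc (0:ℝ) 1, (𝒳 θ).Nonempty)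
    (hXconv : ∀ θ ∈ Set.Icc (0:ℝ) 1, Convex ℝ (𝒳 θ))
    (hXcomp : ∀ θ ∈ Set.Icc (0:ℝ) 1, IsCompact (𝒳 θ))
    (hXbd : ∀ θ ∈ Set.Icc (0:ℝ) 1, 𝒳 θ ⊆ Metric.closedBall 0 R)
    (hXine : ∀ i, (Xi i).Nonempty) (hXiconv : ∀ i, Convex ℝ (Xi i))
    (hXicomp : ∀ i, IsCompact (Xi i))
    (hH : ∀ i, ∀ θ ∈ Θp i, Metric.hausdorffDist (𝒳 θ) (Xi i) ≤ d i)
    (hD : ∀ i, d i ≤ D)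
    (v : Fin I → EuclideanSpace ℝ (Fin T)) (hv : ∀ i, v i ∈ Xi i) :
    ∃ y : ℝ → EuclideanSpace ℝ (Fin T), Measurable y ∧
      (∀ θ ∈ Set.Icc (0:ℝ) 1, y θ ∈ 𝒳 θ) ∧
      (∫ θ, ‖v (ι θ) - y θ‖ ^ 2 ∂μ01) ≤ D ^ 2 :=
  symmetric_profile_close_to_feasible_general 𝒳 Θp ι Xi d D hΘcover hι hιmeas hgraph hXne hXconv
    hXcomp hXicomp hH hD v hv
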